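/- arXiv:1405.6773 — 5 statements merged into one kernel-verified Lean document; each statement's English description precedes it below -/
import Mathlib

section
/- The function f : ℝ → ℝ defined by f(t) = t/(1 − e^{−t}) is convex on the open interval (0, ∞). -/
/-!
Differentiating twice, `f''(t) = e^{-t} (t (1 + e^{-t}) - 2 (1 - e^{-t})) / (1 - e^{-t})^3`.
The bracket vanishes at `t = 0` and its derivative `1 - (1 + t) e^{-t}` is nonnegative because
`e^t ≥ 1 + t`, so `f'' ≥ 0` on `(0, ∞)`.
-/

open Real Set

lemma one_sub_exp_neg_pos {t : ℝ} (ht : 0 < t) : 0 < 1 - exp (-t) :=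
  sub_pos.2 (exp_lt_one_iff.2 (neg_lt_zero.2 ht))

lemma hasDerivAt_exp_neg (t : ℝ) : HasDerivAt (fun s ↦ exp (-s)) (-exp (-t)) t := by
  simpa using (hasDerivAt_neg t).exp

lemma add_one_mul_exp_neg_le_one (t : ℝ) : (t + 1) * exp (-t) ≤ 1 := by
  rw [exp_neg, ← div_eq_mul_inv, div_le_one (exp_pos t)]
  exact add_one_le_exp t

lemma two_mul_one_sub_exp_neg_le {t : ℝ} (ht : 0 ≤ t) :
    2 * (1 - exp (-t)) ≤ t * (1 + exp (-t)) := by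
  let g : ℝ → ℝ := fun s ↦ s * (1 + exp (-s)) - 2 * (1 - exp (-s))
  have hg (s : ℝ) : HasDerivAt g (1 - (s + 1) * exp (-s)) s := by
    refine (((hasDerivAt_id' s).mul ((hasDerivAt_exp_neg s).const_add 1)).sub
      (((hasDerivAt_exp_neg s).const_sub 1).const_mul 2)).congr_deriv ?_
    ring
  have hg_mono : MonotoneOn g (Ici 0) :=
    monotoneOn_of_hasDerivWithinAt_nonneg (convex_Ici 0)
      (fun s _ ↦ (hg s).continuousAt.continuousWithinAt)
      (fun s _ ↦ (hg s).hasDerivWithinAt)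
      (fun s _ ↦ sub_nonneg.2 (add_one_mul_exp_neg_le_one s))
  have hg_zero_le : g 0 ≤ g t := hg_mono self_mem_Ici ht ht
  simp only [g, neg_zero, exp_zero] at hg_zero_le
  linarith

lemma hasDerivAt_div_one_sub_exp_neg {t : ℝ} (ht : 0 < t) :
    HasDerivAt (fun s ↦ s / (1 - exp (-s)))
      ((1 - exp (-t) - t * exp (-t)) / (1 - exp (-t)) ^ 2) t := by
  refine ((hasDerivAt_id' t).div ((hasDerivAt_exp_neg t).const_sub 1)
    (one_sub_exp_neg_pos ht).ne').congr_deriv ?_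
  ring

lemma hasDerivAt_deriv_div_one_sub_exp_neg {t : ℝ} (ht : 0 < t) :
    HasDerivAt (fun s ↦ (1 - exp (-s) - s * exp (-s)) / (1 - exp (-s)) ^ 2)
      (exp (-t) * (t * (1 + exp (-t)) - 2 * (1 - exp (-t))) / (1 - exp (-t)) ^ 3) t := by
  have hD := (hasDerivAt_exp_neg t).const_sub 1
  have hD_ne : 1 - exp (-t) ≠ 0 := (one_sub_exp_neg_pos ht).ne'
  refine ((hD.sub ((hasDerivAt_id' t).mul (hasDerivAt_exp_neg t))).div (hD.pow 2)
    (pow_ne_zero 2 hD_ne)).congr_deriv ?_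
  simp only [Pi.pow_apply, Pi.sub_apply, Pi.mul_apply]
  field_simp
  ring

/-- The function `f(t) = t / (1 − e^{−t})` is convex on `(0, ∞)`. -/
theorem stmt_1 :
    ConvexOn ℝ (Set.Ioi (0 : ℝ)) (fun t : ℝ => t / (1 - Real.exp (-t))) := by
  refine convexOn_of_hasDerivWithinAt2_nonneg (convex_Ioi 0)
    (fun t ht ↦ (hasDerivAt_div_one_sub_exp_neg ht).continuousAt.continuousWithinAt)
    (fun t ht ↦ (hasDerivAt_div_one_sub_exp_neg (interior_subset ht)).hasDerivWithinAt)
    (fun t ht ↦ (hasDerivAt_deriv_div_one_sub_exp_neg (interior_subset ht)).hasDerivWithinAt)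
    fun t ht ↦ ?_
  have ht : 0 < t := interior_subset ht
  exact div_nonneg
    (mul_nonneg (exp_pos _).le (sub_nonneg.2 (two_mul_one_sub_exp_neg_le ht.le)))
    (pow_pos (one_sub_exp_neg_pos ht) 3).le
end

section
/- Let M, B_f, B_m, A_m, λ_u, λ_f be positive real constants. Then the function F(x) = (M·λ_u·x)/(B_f·(1 − e^{−λ_u·x})) + (A_m·λ_u·(1 − λ_f·x))/(B_m·(1 − e^{−A_m·λ_u·(1−λ_f·x)})) is convex on the open interval (0, 1/λ_f). -/
/-! Writing `g t = t / (1 - e^{-t})`, the objective is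
`F x = (M / B_f) g (λ_u x) + (1 / B_m) g (A_m λ_u (1 - λ_f x))`, a nonnegative combination of `g`
composed with affine maps that send `(0, 1/λ_f)` into `(0, ∞)`. So it suffices that `g` is convex
on `(0, ∞)`. There `g t = t + t / (e^t - 1)`, and the second derivative of `t / (e^t - 1)` is
`e^t ((t - 2) e^t + t + 2) / (e^t - 1)^3`. The factor `(t - 2) e^t + t + 2` vanishes at `0` and
is increasing, since its derivative `1 - (1 - t) e^t` is nonnegative by `1 - t ≤ e^{-t}`. -/

open Real Set

lemma one_sub_mul_exp_le_one (t : ℝ) : (1 - t) * exp t ≤ 1 := by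
  have h := mul_le_mul_of_nonneg_right (one_sub_le_exp_neg t) (exp_pos t).le
  rwa [← exp_add, neg_add_cancel, exp_zero] at h

lemma sub_two_mul_exp_add_add_two_nonneg {t : ℝ} (ht : 0 ≤ t) :
    0 ≤ (t - 2) * exp t + t + 2 := by
  have hderiv (x : ℝ) :
      HasDerivAt (fun x => (x - 2) * exp x + x + 2) ((x - 1) * exp x + 1) x := by
    refine ((((hasDerivAt_id' x).sub_const 2).mul (hasDerivAt_exp x)).add
      (hasDerivAt_id' x)).add_const 2 |>.congr_deriv ?_
    ring
  have hmono := monotone_of_hasDerivAt_nonneg hderiv fun x =>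
    show 0 ≤ (x - 1) * exp x + 1 by linarith [one_sub_mul_exp_le_one x]
  simpa using hmono ht

lemma exp_sub_one_ne_zero {t : ℝ} (ht : t ≠ 0) : exp t - 1 ≠ 0 :=
  sub_ne_zero.2 (mt (exp_eq_one_iff t).1 ht)

lemma hasDerivAt_div_exp_sub_one {t : ℝ} (ht : t ≠ 0) :
    HasDerivAt (fun t => t / (exp t - 1)) ((exp t - 1 - t * exp t) / (exp t - 1) ^ 2) t := by
  refine (hasDerivAt_id' t).div ((hasDerivAt_exp t).sub_const 1) (exp_sub_one_ne_zero ht)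
    |>.congr_deriv ?_
  ring

lemma hasDerivAt_deriv_div_exp_sub_one {t : ℝ} (ht : t ≠ 0) :
    HasDerivAt (fun t => (exp t - 1 - t * exp t) / (exp t - 1) ^ 2)
      (exp t * ((t - 2) * exp t + t + 2) / (exp t - 1) ^ 3) t := by
  have hne := exp_sub_one_ne_zero ht
  refine (((hasDerivAt_exp t).sub_const 1).sub ((hasDerivAt_id' t).mul (hasDerivAt_exp t))).div
    (((hasDerivAt_exp t).sub_const 1).pow 2) (pow_ne_zero 2 hne) |>.congr_deriv ?_
  simp only [Pi.sub_apply, Pi.mul_apply, Pi.pow_apply]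
  field_simp
  ring

theorem convexOn_div_exp_sub_one : ConvexOn ℝ (Ioi 0) fun t => t / (exp t - 1) := by
  have hcont : ContinuousOn (fun t => t / (exp t - 1)) (Ioi 0) :=
    continuousOn_id.div (continuous_exp.sub continuous_const).continuousOn
      fun t ht => exp_sub_one_ne_zero (ne_of_gt ht)
  refine convexOn_of_hasDerivWithinAt2_nonneg (convex_Ioi 0) hcont
    (f' := fun t => (exp t - 1 - t * exp t) / (exp t - 1) ^ 2)
    (f'' := fun t => exp t * ((t - 2) * exp t + t + 2) / (exp t - 1) ^ 3) ?_ ?_ ?_ <;>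
    rw [interior_Ioi] <;> intro t (ht : 0 < t)
  · exact (hasDerivAt_div_exp_sub_one ht.ne').hasDerivWithinAt
  · exact (hasDerivAt_deriv_div_exp_sub_one ht.ne').hasDerivWithinAt
  · have hden : 0 < exp t - 1 := sub_pos.2 (one_lt_exp_iff.2 ht)
    have := sub_two_mul_exp_add_add_two_nonneg ht.le
    positivity

theorem div_one_sub_exp_neg_eq (t : ℝ) : t / (1 - exp (-t)) = t + t / (exp t - 1) := by
  rcases eq_or_ne t 0 with rfl | ht
  · simp -- both sides are `0`, by `x / 0 = 0`
  rw [exp_neg]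
  have hne := exp_sub_one_ne_zero ht
  field_simp
  ring

theorem convexOn_div_one_sub_exp_neg : ConvexOn ℝ (Ioi 0) fun t => t / (1 - exp (-t)) :=
  ((convexOn_id (convex_Ioi 0)).add convexOn_div_exp_sub_one).congr fun t _ =>
    (div_one_sub_exp_neg_eq t).symm

theorem ConvexOn.const_mul_comp_mul_add {s t : Set ℝ} {f : ℝ → ℝ} (hf : ConvexOn ℝ t f)
    (hs : Convex ℝ s) {c : ℝ} (hc : 0 ≤ c) {p q : ℝ}
    (hst : MapsTo (fun x => p * x + q) s t) :
    ConvexOn ℝ s fun x => c * f (p * x + q) := by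
  have hline (x : ℝ) : AffineMap.lineMap q (p + q) x = p * x + q := by
    rw [AffineMap.lineMap_apply_ring']
    ring
  refine (((hf.comp_affineMap (AffineMap.lineMap q (p + q))).subset (fun x hx => ?_) hs).smul
    hc).congr fun x _ => ?_
  · simpa only [mem_preimage, hline] using hst hx
  · simp only [Function.comp_apply, hline, smul_eq_mul]

/-- Proposition 2 (core): the load-balancing objective
`F(x) = (M λ_u x)/(B_f (1 − e^{−λ_u x}))
      + (A_m λ_u (1 − λ_f x))/(B_m (1 − e^{−A_m λ_u (1 − λ_f x)}))`
is convex on `(0, 1/λ_f)`. -/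
theorem stmt_2 (M B_f B_m A_m lam_u lam_f : ℝ)
    (hM : 0 < M) (hBf : 0 < B_f) (hBm : 0 < B_m) (hAm : 0 < A_m)
    (hlu : 0 < lam_u) (hlf : 0 < lam_f) :
    ConvexOn ℝ (Set.Ioo (0 : ℝ) (1 / lam_f))
      (fun x : ℝ =>
        (M * lam_u * x) / (B_f * (1 - Real.exp (-(lam_u * x)))) +
        (A_m * lam_u * (1 - lam_f * x)) /
          (B_m * (1 - Real.exp (-(A_m * lam_u * (1 - lam_f * x)))))) := by
  have hg := convexOn_div_one_sub_exp_neg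
  have hs : Convex ℝ (Ioo 0 (1 / lam_f)) := convex_Ioo _ _
  have h₁ := hg.const_mul_comp_mul_add hs (div_nonneg hM.le hBf.le) (p := lam_u) (q := 0)
    fun x hx => show 0 < lam_u * x + 0 by rw [add_zero]; exact mul_pos hlu hx.1
  have h₂ := hg.const_mul_comp_mul_add hs (one_div_nonneg.2 hBm.le)
    (p := -(A_m * lam_u * lam_f)) (q := A_m * lam_u) fun x hx => by
      have : lam_f * x < 1 := by rw [← lt_div_iff₀' hlf]; exact hx.2
      show 0 < -(A_m * lam_u * lam_f) * x + A_m * lam_u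
      nlinarith [mul_pos hAm hlu]
  refine (h₁.add h₂).congr fun x _ => ?_
  rw [Pi.add_apply, add_zero,
    show -(A_m * lam_u * lam_f) * x + A_m * lam_u = A_m * lam_u * (1 - lam_f * x) by ring]
  simp only [div_mul_div_comm, one_mul, mul_assoc]
end

section
/- The function g : (0, ∞) → ℝ defined by g(y) = (e^{−y} + y − 1)/(y·(1 − e^{−y})) is monotone nondecreasing on (0, ∞). -/
/-!
Since `g y = 1 + ((e^y - 1)⁻¹ - y⁻¹)`, it suffices that the derivative `1 / y² - e^y / (e^y - 1)²`
of the bracket is nonnegative. Writing `e^y - 1 = e^{y/2} · 2 sinh (y/2)`, this is `|y| ≤ |2 sinh (y/2)|`.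
-/

open Real Set

lemma exp_sub_one_sq_eq (x : ℝ) : (exp x - 1) ^ 2 = exp x * (2 * sinh (x / 2)) ^ 2 := by
  have hhalf : exp x = exp (x / 2) ^ 2 := by rw [← exp_nat_mul]; ring_nf
  have hinv : exp (x / 2) * exp (-(x / 2)) = 1 := by rw [← exp_add]; simp
  rw [sinh_eq, hhalf]
  linear_combination (2 * exp (x / 2) ^ 2 - exp (x / 2) * exp (-(x / 2)) - 1) * hinv

lemma sq_le_sq_two_mul_sinh_half (x : ℝ) : x ^ 2 ≤ (2 * sinh (x / 2)) ^ 2 := by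
  have habs : |x / 2| ≤ |sinh (x / 2)| := by
    rw [abs_sinh]
    exact self_le_sinh_iff.mpr (abs_nonneg _)
  rw [← sq_abs, ← sq_abs (2 * sinh _), abs_mul, abs_two]
  gcongr
  rw [abs_div, abs_two] at habs
  linarith

lemma sq_mul_exp_le_exp_sub_one_sq (x : ℝ) : x ^ 2 * exp x ≤ (exp x - 1) ^ 2 := by
  rw [exp_sub_one_sq_eq, mul_comm]
  exact mul_le_mul_of_nonneg_left (sq_le_sq_two_mul_sinh_half x) (exp_pos x).le

lemma hasDerivAt_inv_exp_sub_one_sub_inv {x : ℝ} (hx : x ≠ 0) :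
    HasDerivAt (fun y => (exp y - 1)⁻¹ - y⁻¹) (-exp x / (exp x - 1) ^ 2 - -(x ^ 2)⁻¹) x := by
  have hexp : exp x - 1 ≠ 0 := sub_ne_zero.mpr ((exp_eq_one_iff _).not.mpr hx)
  exact (((hasDerivAt_exp x).sub_const 1).inv hexp).sub (hasDerivAt_inv hx)

lemma monotoneOn_inv_exp_sub_one_sub_inv :
    MonotoneOn (fun y => (exp y - 1)⁻¹ - y⁻¹) (Ioi 0) := by
  have hderiv : ∀ x ∈ Ioi (0 : ℝ), HasDerivAt (fun y => (exp y - 1)⁻¹ - y⁻¹)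
      (-exp x / (exp x - 1) ^ 2 - -(x ^ 2)⁻¹) x :=
    fun x hx => hasDerivAt_inv_exp_sub_one_sub_inv (ne_of_gt hx)
  refine monotoneOn_of_hasDerivWithinAt_nonneg (convex_Ioi 0)
    (fun x hx => (hderiv x hx).continuousAt.continuousWithinAt)
    (fun x hx => (hderiv x (interior_subset hx)).hasDerivWithinAt) (fun x hx => ?_)
  rw [interior_Ioi, mem_Ioi] at hx
  have hexp : 0 < exp x - 1 := by linarith [add_one_lt_exp (ne_of_gt hx)]
  have hle : exp x / (exp x - 1) ^ 2 ≤ (x ^ 2)⁻¹ := by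
    rw [← one_div, div_le_div_iff₀ (by positivity) (by positivity), one_mul, mul_comm]
    exact sq_mul_exp_le_exp_sub_one_sq x
  rw [neg_div]
  linarith

lemma exp_neg_add_sub_one_div_eq {y : ℝ} (hy : y ≠ 0) :
    (exp (-y) + y - 1) / (y * (1 - exp (-y))) = 1 + ((exp y - 1)⁻¹ - y⁻¹) := by
  have hexp : exp y - 1 ≠ 0 := sub_ne_zero.mpr ((exp_eq_one_iff _).not.mpr hy)
  rw [exp_neg]
  field_simp
  ring

/-- The function `g(y) = (e^{−y} + y − 1)/(y·(1 − e^{−y}))` is monotone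
nondecreasing on `(0, ∞)`. -/
theorem stmt_7 :
    MonotoneOn
      (fun y : ℝ => (Real.exp (-y) + y - 1) / (y * (1 - Real.exp (-y))))
      (Set.Ioi (0 : ℝ)) :=
  (monotoneOn_inv_exp_sub_one_sub_inv.const_add 1).congr fun _ hy =>
    (exp_neg_add_sub_one_div_eq (ne_of_gt hy)).symm
end

section
/- For every real y ≥ 0, one has (e^{−y} − 1/2)² + e^{−y}·(y − 1)² ≤ 5/4. -/
/-- For every real `y ≥ 0`, `(e^{−y} − 1/2)² + e^{−y}·(y − 1)² ≤ 5/4`. -/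
theorem stmt_8 (y : ℝ) (hy : 0 ≤ y) :
    (Real.exp (-y) - 1 / 2) ^ 2 + Real.exp (-y) * (y - 1) ^ 2 ≤ 5 / 4 := by
  have hsum := Real.sum_le_exp_of_nonneg hy 4
  have hexp : (y - 1) ^ 2 ≤ Real.exp y := by
    have : (1 : ℝ) + y + y ^ 2 / 2 + y ^ 3 / 6 ≤ Real.exp y := by
      convert hsum using 1
      simp [Finset.sum_range_succ, Nat.factorial]
    nlinarith [sq_nonneg y, sq_nonneg (y - 3), pow_pos (lt_of_lt_of_le zero_lt_one (by nlinarith [sq_nonneg y] : (1:ℝ) ≤ 1 + y)) 3]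
  have ht0 : 0 < Real.exp (-y) := Real.exp_pos _
  have ht1 : Real.exp (-y) ≤ 1 := Real.exp_le_one_iff.2 (by linarith)
  have hmul : Real.exp (-y) * (y - 1) ^ 2 ≤ 1 := by
    have h := Real.exp_neg y
    rw [h]
    rw [inv_mul_le_iff₀ (Real.exp_pos y)]
    linarith
  nlinarith [sq_nonneg (Real.exp (-y))]
end

section
/- Let λ_u > 0, B_f > 0, M > 0, K > 0, and 0 < X_min ≤ X_max be real numbers, and let B_o : ℝ → ℝ be a function that is positive and antitone (monotone nonincreasing) on the interval [X_min, X_max]. Define C(x) = (1 − e^{−λ_u x})/(λ_u x) and D(x) = (λ_u x + e^{−λ_u x} − 1)/(λ_u x)². If (B_f · C(X_min))/(B_o(X_max) · D(X_min)) ≤ M/K, then for every x ∈ [X_min, X_max] one has (B_f · C(x))/(B_o(x) · D(x)) ≤ M/K. -/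
/-!
Since `D(x)/C(x) = 1/(1 - e^{-λx}) - 1/(λx)`, the ratio `B_f C/(B_o D)` equals
`B_f / (B_o(x) · G(λx))` with `G(t) = (1 - e^{-t})⁻¹ - t⁻¹`. Both factors of the denominator move
in the right direction: `B_o` is antitone and `G` is increasing on `(0, ∞)`, its derivative
`t⁻² - e^{-t}/(1 - e^{-t})²` being nonnegative by `t ≤ 2 sinh (t/2)`. Hence the denominator is
smallest at `B_o(X_max) · G(λ X_min)`, which is the endpoint condition.
-/

open Real Set

lemma mul_div_mul_eq_div_mul_div {K : Type*} [Field K] (a b c d : K) :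
    a * c / (b * d) = a / (b * (d / c)) := by
  rw [← mul_div_assoc, div_div_eq_mul_div]

namespace Real

lemma one_sub_exp_neg_pos {t : ℝ} (ht : 0 < t) : 0 < 1 - exp (-t) :=
  sub_pos.mpr (exp_lt_one_iff.mpr (neg_lt_zero.mpr ht))

lemma add_exp_neg_sub_one_pos {t : ℝ} (ht : 0 < t) : 0 < t + exp (-t) - 1 := by
  linarith [add_one_lt_exp (neg_ne_zero.mpr ht.ne')]

lemma mul_exp_neg_half_le_one_sub_exp_neg {t : ℝ} (ht : 0 ≤ t) :
    t * exp (-(t / 2)) ≤ 1 - exp (-t) := by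
  have hsinh : t ≤ exp (t / 2) - exp (-(t / 2)) := by
    have := self_le_sinh_iff.mpr (by positivity : 0 ≤ t / 2)
    rw [sinh_eq] at this
    linarith
  calc t * exp (-(t / 2)) ≤ (exp (t / 2) - exp (-(t / 2))) * exp (-(t / 2)) :=
        mul_le_mul_of_nonneg_right hsinh (exp_pos _).le
    _ = 1 - exp (-t) := by
        rw [sub_mul, ← exp_add, ← exp_add, add_neg_cancel, exp_zero, ← neg_add, add_halves]

lemma hasDerivAt_inv_one_sub_exp_neg_sub_inv {t : ℝ} (ht : 0 < t) :
    HasDerivAt (fun s => (1 - exp (-s))⁻¹ - s⁻¹)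
      ((t ^ 2)⁻¹ - exp (-t) / (1 - exp (-t)) ^ 2) t := by
  have hexp : HasDerivAt (fun s => 1 - exp (-s)) (exp (-t)) t := by
    simpa using ((hasDerivAt_neg t).exp).const_sub 1
  exact ((hexp.inv (one_sub_exp_neg_pos ht).ne').sub (hasDerivAt_inv ht.ne')).congr_deriv (by ring)

lemma monotoneOn_inv_one_sub_exp_neg_sub_inv :
    MonotoneOn (fun t => (1 - exp (-t))⁻¹ - t⁻¹) (Ioi 0) := by
  refine monotoneOn_of_hasDerivWithinAt_nonneg (convex_Ioi 0) ?_
    (fun t ht => (hasDerivAt_inv_one_sub_exp_neg_sub_inv (interior_subset ht)).hasDerivWithinAt)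
    ?_
  · exact fun t ht =>
      (hasDerivAt_inv_one_sub_exp_neg_sub_inv ht).continuousAt.continuousWithinAt
  · intro t ht
    rw [interior_Ioi, mem_Ioi] at ht
    have hkey : (t * exp (-(t / 2))) ^ 2 ≤ (1 - exp (-t)) ^ 2 :=
      pow_le_pow_left₀ (by positivity) (mul_exp_neg_half_le_one_sub_exp_neg ht.le) 2
    rw [mul_pow, ← exp_nat_mul, Nat.cast_ofNat, mul_neg, mul_div_cancel₀ t two_ne_zero] at hkey
    have hpos := one_sub_exp_neg_pos ht
    rw [sub_nonneg, div_le_iff₀ (by positivity), inv_mul_eq_div, le_div_iff₀ (by positivity)]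
    linarith

lemma div_eq_inv_one_sub_exp_neg_sub_inv {t : ℝ} (ht : 0 < t) :
    (t + exp (-t) - 1) / t ^ 2 / ((1 - exp (-t)) / t) = (1 - exp (-t))⁻¹ - t⁻¹ := by
  have hpos := one_sub_exp_neg_pos ht
  field_simp
  ring

lemma inv_one_sub_exp_neg_sub_inv_pos {t : ℝ} (ht : 0 < t) : 0 < (1 - exp (-t))⁻¹ - t⁻¹ := by
  rw [← div_eq_inv_one_sub_exp_neg_sub_inv ht]
  have := add_exp_neg_sub_one_pos ht
  have := one_sub_exp_neg_pos ht
  positivity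

end Real

theorem stmt_11_general (lam_u B_f M K Xmin Xmax : ℝ) (B_o : ℝ → ℝ)
    (hlu : 0 < lam_u) (hBf : 0 < B_f)
    (hXmin : 0 < Xmin)
    (hBo_pos : ∀ x ∈ Set.Icc Xmin Xmax, 0 < B_o x)
    (hBo_anti : AntitoneOn B_o (Set.Icc Xmin Xmax))
    (C : ℝ → ℝ) (D : ℝ → ℝ)
    (hC : ∀ x, C x = (1 - Real.exp (-(lam_u * x))) / (lam_u * x))
    (hD : ∀ x, D x = (lam_u * x + Real.exp (-(lam_u * x)) - 1) / (lam_u * x) ^ 2)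
    (hyp : B_f * C Xmin / (B_o Xmax * D Xmin) ≤ M / K) :
    ∀ x ∈ Set.Icc Xmin Xmax, B_f * C x / (B_o x * D x) ≤ M / K := by
  set G : ℝ → ℝ := fun t => (1 - exp (-t))⁻¹ - t⁻¹
  have hDC : ∀ y, 0 < y → D y / C y = G (lam_u * y) := fun y hy => by
    rw [hC, hD]; exact div_eq_inv_one_sub_exp_neg_sub_inv (mul_pos hlu hy)
  intro x hx
  have hx0 : 0 < x := hXmin.trans_le hx.1
  have hXmax : Xmax ∈ Icc Xmin Xmax := ⟨hx.1.trans hx.2, le_rfl⟩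
  have hG : G (lam_u * Xmin) ≤ G (lam_u * x) :=
    monotoneOn_inv_one_sub_exp_neg_sub_inv (mul_pos hlu hXmin) (mul_pos hlu hx0)
      (mul_le_mul_of_nonneg_left hx.1 hlu.le)
  have hG0 : 0 < G (lam_u * Xmin) := inv_one_sub_exp_neg_sub_inv_pos (mul_pos hlu hXmin)
  calc B_f * C x / (B_o x * D x) = B_f / (B_o x * G (lam_u * x)) := by rw [mul_div_mul_eq_div_mul_div, hDC x hx0]
    _ ≤ B_f / (B_o Xmax * G (lam_u * Xmin)) :=
      div_le_div_of_nonneg_left hBf.le (mul_pos (hBo_pos _ hXmax) hG0)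
        (mul_le_mul (hBo_anti hx hXmax hx.2) hG hG0.le (hBo_pos x hx).le)
    _ = B_f * C Xmin / (B_o Xmax * D Xmin) := by rw [mul_div_mul_eq_div_mul_div, hDC Xmin hXmin]
    _ ≤ M / K := hyp

/-- Proposition 3: if `B_f·C(X_min)/(B_o(X_max)·D(X_min)) ≤ M/K`, where
`C(x) = (1 − e^{−λ_u x})/(λ_u x)` and `D(x) = (λ_u x + e^{−λ_u x} − 1)/(λ_u x)²`,
and `B_o` is positive and antitone on `[X_min, X_max]`, then
`B_f·C(x)/(B_o(x)·D(x)) ≤ M/K` for all `x ∈ [X_min, X_max]`. -/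
theorem stmt_11 (lam_u B_f M K Xmin Xmax : ℝ) (B_o : ℝ → ℝ)
    (hlu : 0 < lam_u) (hBf : 0 < B_f) (hM : 0 < M) (hK : 0 < K)
    (hXmin : 0 < Xmin) (hXle : Xmin ≤ Xmax)
    (hBo_pos : ∀ x ∈ Set.Icc Xmin Xmax, 0 < B_o x)
    (hBo_anti : AntitoneOn B_o (Set.Icc Xmin Xmax))
    (C : ℝ → ℝ) (D : ℝ → ℝ)
    (hC : ∀ x, C x = (1 - Real.exp (-(lam_u * x))) / (lam_u * x))
    (hD : ∀ x, D x = (lam_u * x + Real.exp (-(lam_u * x)) - 1) / (lam_u * x) ^ 2)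
    (hyp : B_f * C Xmin / (B_o Xmax * D Xmin) ≤ M / K) :
    ∀ x ∈ Set.Icc Xmin Xmax, B_f * C x / (B_o x * D x) ≤ M / K :=
  stmt_11_general lam_u B_f M K Xmin Xmax B_o hlu hBf hXmin hBo_pos hBo_anti C D hC hD hyp
end
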